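/- For every countable limit ordinal α there exists a countable reduced abelian p-group G of length exactly α such that u_β(G) = ℵ₀ for every ordinal β < α. -/

import Mathlib

/-!
Let `G` be the abelian group generated by symbols `δ_σ`, where `σ` ranges over the finite
decreasing sequences `α > γ₁ > ⋯ > γₖ` (`k ≥ 1`), subject to `p δ_σ = δ_{σ'}`, where `σ'` drops the
last term `γₖ` (and `p δ_σ = 0` when `k = 1`). Every element has a representative with
coefficients in `[0, p)`, and such a representative lies in the span of the `δ_σ` with `γₖ ≥ β` as
soon as its class does. From this, `G_β` is exactly the subgroup generated by the `δ_σ` with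
`γₖ ≥ β`. So `G_α = 0`, the generator `δ_(β)` lies in `G_β \ G_{β+1}` for every `β < α`, and the
elements `δ_(γ, β) - δ_(γ, β + 1)`, `β + 1 < γ < α`, are independent in `P_β / P_{β+1}`; `G` is
countable because `α` is.
-/

open Ordinal

/-- Scalar multiplication by `p` as an additive group homomorphism. -/
def pHom (p : ℕ) (G : Type*) [AddCommGroup G] : G →+ G :=
  AddMonoidHom.mk' (fun x => p • x) (fun a b => smul_add p a b)

@[simp] lemma pHom_apply (p : ℕ) {G : Type*} [AddCommGroup G] (x : G) :
    pHom p G x = p • x := rfl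

/-- The Ulm subgroups `G_β`: `G_0 = G`, `G_{β+1} = pG_β`, and intersections at limits. -/
noncomputable def ulmSub (p : ℕ) (G : Type*) [AddCommGroup G] (β : Ordinal.{0}) :
    AddSubgroup G :=
  Ordinal.limitRecOn β ⊤ (fun _ H => AddSubgroup.map (pHom p G) H)
    (fun o _ ih => ⨅ (γ : Ordinal.{0}) (h : γ < o), ih γ h)

lemma ulmSub_succ (p : ℕ) (G : Type*) [AddCommGroup G] (β : Ordinal.{0}) :
    ulmSub p G (β + 1) = AddSubgroup.map (pHom p G) (ulmSub p G β) := by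
  unfold ulmSub
  rw [Ordinal.add_one_eq_succ, Ordinal.limitRecOn_succ]

lemma ulmSub_succ_le (p : ℕ) (G : Type*) [AddCommGroup G] (β : Ordinal.{0}) :
    ulmSub p G (β + 1) ≤ ulmSub p G β := by
  rw [ulmSub_succ]
  rintro x ⟨y, hy, rfl⟩
  simpa using (ulmSub p G β).nsmul_mem hy p

/-- An abelian `p`-group: every element is killed by some power of `p`. -/
def IsAbelianPGroup (p : ℕ) (G : Type*) [AddCommGroup G] : Prop :=
  ∀ x : G, ∃ n : ℕ, p ^ n • x = 0

/-- The length `λ(G)`: the least ordinal `β` with `G_β = G_{β+1}`. -/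
noncomputable def ulmLength (p : ℕ) (G : Type*) [AddCommGroup G] : Ordinal.{0} :=
  sInf {β : Ordinal.{0} | ulmSub p G β = ulmSub p G (β + 1)}

/-- `G` is reduced if `G_{λ(G)} = {0}`. -/
def IsReducedPGroup (p : ℕ) (G : Type*) [AddCommGroup G] : Prop :=
  ulmSub p G (ulmLength p G) = ⊥

/-- `P_β(G) = {x ∈ G_β : px = 0}`. -/
noncomputable def ulmP (p : ℕ) (G : Type*) [AddCommGroup G] (β : Ordinal.{0}) : AddSubgroup G :=
  (pHom p G).ker ⊓ ulmSub p G β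

/-- The quotient `P_β(G)/P_{β+1}(G)` (as a quotient of `P_β(G)` by the subgroup
corresponding to `P_{β+1}(G)`). -/
noncomputable def ulmQuot (p : ℕ) (G : Type*) [AddCommGroup G] (β : Ordinal.{0}) :=
  (ulmP p G β) ⧸ ((ulmP p G (β + 1)).addSubgroupOf (ulmP p G β))

noncomputable instance (p : ℕ) (G : Type*) [AddCommGroup G] (β : Ordinal.{0}) :
    AddCommGroup (ulmQuot p G β) :=
  inferInstanceAs (AddCommGroup ((ulmP p G β) ⧸ ((ulmP p G (β + 1)).addSubgroupOf (ulmP p G β))))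

noncomputable instance (p : ℕ) (G : Type*) [AddCommGroup G] (β : Ordinal.{0}) :
    Module (ZMod p) (ulmQuot p G β) :=
  QuotientAddGroup.zmodModule (by
    intro x
    simp only [AddSubgroup.mem_addSubgroupOf]
    have hx : ((p • x : ulmP p G β) : G) = 0 := by
      have := x.2
      simp only [ulmP, AddSubgroup.mem_inf, AddMonoidHom.mem_ker, pHom_apply] at this
      simpa using this.1
    rw [hx]
    exact (ulmP p G (β + 1)).zero_mem)

/-- The Ulm invariant `u_β(G)`: the dimension of `P_β(G)/P_{β+1}(G)` over `ℤ/pℤ`. -/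
noncomputable def ulmInvariant (p : ℕ) (G : Type*) [AddCommGroup G] (β : Ordinal.{0}) :
    Cardinal :=
  Module.rank (ZMod p) (ulmQuot p G β)

open Classical in
/-- The height of `x`: the unique ordinal `β` with `x ∈ G_β \ G_{β+1}` if it exists, and `∞`
(= `⊤`) otherwise. -/
noncomputable def height (p : ℕ) {G : Type*} [AddCommGroup G] (x : G) : WithTop Ordinal.{0} :=
  if ∃ β : Ordinal.{0}, x ∈ ulmSub p G β ∧ x ∉ ulmSub p G (β + 1) then
    ((sInf {β : Ordinal.{0} | x ∈ ulmSub p G β ∧ x ∉ ulmSub p G (β + 1)} : Ordinal.{0}) :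
      WithTop Ordinal.{0})
  else ⊤

/-- `d` is proper with respect to `S` if `h(d) ≥ h(d+s)` for every `s ∈ S`. -/
def ProperWRT (p : ℕ) {G : Type*} [AddCommGroup G] (S : AddSubgroup G) (d : G) : Prop :=
  ∀ s ∈ S, height p (d + s) ≤ height p d


universe u

section UlmSubgroups

variable {p : ℕ} {G : Type u} [AddCommGroup G]

lemma ulmSub_zero : ulmSub p G 0 = ⊤ := by
  rw [ulmSub, Ordinal.limitRecOn_zero]

lemma ulmSub_limit {o : Ordinal.{0}} (ho : Order.IsSuccLimit o) :
    ulmSub p G o = ⨅ (γ : Ordinal.{0}) (_ : γ < o), ulmSub p G γ := by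
  rw [ulmSub, Ordinal.limitRecOn_limit _ _ _ _ ho]
  rfl

lemma ulmSub_eq_of {S : Ordinal.{0} → AddSubgroup G} (h0 : S 0 = ⊤)
    (hsucc : ∀ β, S (β + 1) = (S β).map (pHom p G))
    (hlim : ∀ o, Order.IsSuccLimit o → S o = ⨅ (γ : Ordinal.{0}) (_ : γ < o), S γ)
    (β : Ordinal.{0}) : ulmSub p G β = S β := by
  induction β using Ordinal.limitRecOn with
  | zero => rw [ulmSub_zero, h0]
  | add_one β ih => rw [ulmSub_succ, ih, hsucc]
  | limit o ho ih =>
    rw [ulmSub_limit ho, hlim o ho]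
    exact iInf_congr fun γ => iInf_congr fun hγ => ih γ hγ

lemma ulmLength_eq_of {α : Ordinal.{0}} (hlt : ∀ β < α, ulmSub p G β ≠ ulmSub p G (β + 1))
    (hα : ulmSub p G α = ⊥) : ulmLength p G = α := by
  have hstable : ulmSub p G α = ulmSub p G (α + 1) :=
    le_antisymm (hα ▸ bot_le) (ulmSub_succ_le p G α)
  refine le_antisymm (csInf_le' hstable) (le_csInf ⟨α, hstable⟩ fun β hβ => ?_)
  exact not_lt.mp fun hβα => hlt β hβα hβ

lemma isReducedPGroup_of_ulmSub_eq_bot {α : Ordinal.{0}}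
    (hlt : ∀ β < α, ulmSub p G β ≠ ulmSub p G (β + 1)) (hα : ulmSub p G α = ⊥) :
    IsReducedPGroup p G := by
  rw [IsReducedPGroup, ulmLength_eq_of hlt hα, hα]

lemma ulmInvariant_le_aleph0 [Countable G] (β : Ordinal.{0}) :
    ulmInvariant p G β ≤ Cardinal.aleph0 :=
  (rank_le_card _ _).trans <|
    (Cardinal.mk_le_of_surjective (QuotientAddGroup.mk'_surjective _)).trans Cardinal.mk_le_aleph0

lemma aleph0_le_ulmInvariant [Fact p.Prime] {β : Ordinal.{0}} {ι : Type u} [Infinite ι]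
    (d : ι → G) (hd : ∀ i, d i ∈ ulmP p G β)
    (hind : ∀ c : ι →₀ ZMod p, (c.sum fun i a => a.val • d i) ∈ ulmSub p G (β + 1) → c = 0) :
    Cardinal.aleph0 ≤ ulmInvariant p G β := by
  let π : ulmP p G β →+ ulmQuot p G β := QuotientAddGroup.mk' _
  have hv : LinearIndependent (ZMod p) fun i => π ⟨d i, hd i⟩ := by
    refine linearIndependent_iff.mpr fun c hc => hind c ?_
    have hsum : Finsupp.linearCombination (ZMod p) (fun i => π ⟨d i, hd i⟩) c =
        π (c.sum fun i a => a.val • ⟨d i, hd i⟩) := by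
      simp only [Finsupp.linearCombination_apply, map_finsuppSum, map_nsmul,
        ← Nat.cast_smul_eq_nsmul (ZMod p), ZMod.natCast_zmod_val]
    rw [hsum, ← AddMonoidHom.mem_ker] at hc
    change _ ∈ (QuotientAddGroup.mk' _).ker at hc
    rw [QuotientAddGroup.ker_mk', AddSubgroup.mem_addSubgroupOf] at hc
    simpa [Finsupp.sum] using (AddSubgroup.mem_inf.mp hc).2
  exact (Cardinal.aleph0_le_mk ι).trans hv.cardinal_le_rank

end UlmSubgroups

namespace TreeGroup

open Finsupp

/-- Finite sequences `α > γ₁ > ⋯ > γₖ` (`k ≥ 1`), stored as the increasing lists `[γₖ, …, γ₁]`, so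
that the head `γₖ` is the least entry and dropping it gives the parent node. Entries live in
`α.ToType` rather than `Set.Iio α` to keep the group in `Type`. -/
def Node (α : Ordinal.{0}) : Type :=
  {l : List α.ToType // l ≠ [] ∧ l.IsChain fun x y : α.ToType => (x : Ordinal.{0}) < y}

variable {α : Ordinal.{0}}

namespace Node

instance [Countable α.ToType] : Countable (Node α) := by unfold Node; infer_instance

noncomputable def head (σ : Node α) : Ordinal.{0} := σ.1.head σ.2.1

def parent (σ : Node α) : Option (Node α) :=
  if h : σ.1.tail = [] then none else some ⟨σ.1.tail, h, σ.2.2.tail⟩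

def root (γ : α.ToType) : Node α := ⟨[γ], List.cons_ne_nil _ _, List.isChain_singleton _⟩

def cons (γ : α.ToType) (σ : Node α) (h : (γ : Ordinal.{0}) < σ.head) : Node α :=
  ⟨γ :: σ.1, List.cons_ne_nil _ _, by
    obtain ⟨_ | ⟨a, l⟩, hne, hchain⟩ := σ
    · exact absurd rfl hne
    · exact List.isChain_cons_cons.mpr ⟨h, hchain⟩⟩

@[simp] lemma head_root (γ : α.ToType) : (root γ).head = γ := rfl

@[simp] lemma head_cons (γ : α.ToType) (σ : Node α) (h : (γ : Ordinal.{0}) < σ.head) :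
    (cons γ σ h).head = γ := rfl

@[simp] lemma parent_cons (γ : α.ToType) (σ : Node α) (h : (γ : Ordinal.{0}) < σ.head) :
    (cons γ σ h).parent = some σ :=
  dif_neg σ.2.1

lemma root_injective : Function.Injective (root : α.ToType → Node α) :=
  fun _ _ h => List.head_eq_of_cons_eq (congrArg Subtype.val h)

lemma head_lt (σ : Node α) : σ.head < α := (Ordinal.ToType.toOrd (σ.1.head σ.2.1)).2

lemma one_le_length (σ : Node α) : 1 ≤ σ.1.length := List.length_pos_iff.mpr σ.2.1

lemma eq_cons_of_parent_eq {σ τ : Node α} (h : σ.parent = some τ) :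
    ∃ γ hlt, σ = cons γ τ hlt := by
  obtain ⟨_ | ⟨a, l⟩, hne, hchain⟩ := σ
  · exact absurd rfl hne
  · unfold parent at h
    split_ifs at h with htail
    cases h
    cases l with
    | nil => exact absurd rfl htail
    | cons b l => exact ⟨a, (List.isChain_cons_cons.mp hchain).1, rfl⟩

lemma head_lt_head_of_parent_eq {σ τ : Node α} (h : σ.parent = some τ) : σ.head < τ.head := by
  obtain ⟨γ, hlt, rfl⟩ := eq_cons_of_parent_eq h
  exact hlt

lemma length_eq_of_parent_eq {σ τ : Node α} (h : σ.parent = some τ) :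
    σ.1.length = τ.1.length + 1 := by
  obtain ⟨γ, hlt, rfl⟩ := eq_cons_of_parent_eq h
  rfl

end Node

noncomputable def parentVec (σ : Node α) : Node α →₀ ℤ := σ.parent.elim 0 fun τ => single τ 1

lemma parent_eq_of_parentVec_apply_ne_zero {σ τ : Node α} (h : parentVec σ τ ≠ 0) :
    σ.parent = some τ := by
  rcases hσ : σ.parent with _ | τ'
  · simp [parentVec, hσ] at h
  · simp only [parentVec, hσ, Option.elim_some] at h
    rw [Finsupp.single_apply_ne_zero] at h
    rw [h.1]

noncomputable def toParent : (Node α →₀ ℤ) →ₗ[ℤ] (Node α →₀ ℤ) := linearCombination ℤ parentVec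

lemma toParent_apply (g : Node α →₀ ℤ) (τ : Node α) :
    toParent g τ = ∑ σ ∈ g.support, g σ * parentVec σ τ := by
  simp [toParent, linearCombination_apply, Finsupp.sum]

lemma toParent_single (σ : Node α) : toParent (single σ 1) = parentVec σ := by
  simp [toParent]

lemma exists_parent_eq_of_mem_support_toParent {g : Node α →₀ ℤ} {τ : Node α}
    (hτ : τ ∈ (toParent g).support) : ∃ σ ∈ g.support, σ.parent = some τ := by
  rw [mem_support_iff, toParent_apply] at hτ
  obtain ⟨σ, hσ, hne⟩ := Finset.exists_ne_zero_of_sum_ne_zero hτ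
  exact ⟨σ, hσ, parent_eq_of_parentVec_apply_ne_zero (right_ne_zero_of_mul hne)⟩

lemma toParent_apply_eq_zero {g : Node α →₀ ℤ} {τ : Node α}
    (h : ∀ σ, σ.parent = some τ → g σ = 0) : toParent g τ = 0 := by
  rw [toParent_apply]
  refine Finset.sum_eq_zero fun σ _ => ?_
  by_cases hσ : parentVec σ τ = 0
  · rw [hσ, mul_zero]
  · rw [h σ (parent_eq_of_parentVec_apply_ne_zero hσ), zero_mul]

noncomputable def relations (p : ℕ) (α : Ordinal.{0}) : Submodule ℤ (Node α →₀ ℤ) :=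
  LinearMap.range ((p : ℤ) • LinearMap.id - toParent)

abbrev _root_.TreeGroup (p : ℕ) (α : Ordinal.{0}) : Type := (Node α →₀ ℤ) ⧸ relations p α

noncomputable abbrev mk (p : ℕ) (α : Ordinal.{0}) : (Node α →₀ ℤ) →ₗ[ℤ] TreeGroup p α :=
  (relations p α).mkQ

variable {p : ℕ}

lemma mk_eq_mk_iff {f f' : Node α →₀ ℤ} :
    mk p α f = mk p α f' ↔ ∃ g, (p : ℤ) • g - toParent g = f - f' := by
  rw [Submodule.mkQ_apply, Submodule.mkQ_apply, Submodule.Quotient.eq, relations,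
    LinearMap.mem_range]
  rfl

lemma mk_zsmul_eq_mk_toParent (g : Node α →₀ ℤ) : mk p α ((p : ℤ) • g) = mk p α (toParent g) :=
  mk_eq_mk_iff.mpr ⟨g, rfl⟩

lemma nsmul_mk (g : Node α →₀ ℤ) : p • mk p α g = mk p α (toParent g) := by
  rw [← mk_zsmul_eq_mk_toParent, map_zsmul, natCast_zsmul]

variable (p) in
noncomputable def heightSub (γ : Ordinal.{0}) : AddSubgroup (TreeGroup p α) :=
  ((supported ℤ ℤ {σ : Node α | γ ≤ σ.head}).map (mk p α)).toAddSubgroup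

lemma mem_heightSub {γ : Ordinal.{0}} {x : TreeGroup p α} :
    x ∈ heightSub p γ ↔ ∃ f, (∀ σ ∈ f.support, γ ≤ σ.head) ∧ mk p α f = x := by
  simp [heightSub, mem_supported, Set.subset_def]

lemma heightSub_antitone : Antitone (heightSub p (α := α)) := fun _ _ hγ _ hx => by
  obtain ⟨f, hf, rfl⟩ := mem_heightSub.mp hx
  exact mem_heightSub.mpr ⟨f, fun σ hσ => hγ.trans (hf σ hσ), rfl⟩

variable (p) in
def IsNormalForm (f : Node α →₀ ℤ) : Prop := ∀ σ, 0 ≤ f σ ∧ f σ < p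

/-- At a node of least head below `γ` in the support of `g`, nothing comes in from the children,
so `f` would be a nonzero multiple of `p` there. -/
lemma eq_zero_of_head_lt {γ : Ordinal.{0}} {f h g : Node α →₀ ℤ} (hf : IsNormalForm p f)
    (hh : ∀ σ ∈ h.support, γ ≤ σ.head) (hfg : f = h + (p : ℤ) • g - toParent g) :
    ∀ σ, σ.head < γ → g σ = 0 := by
  classical
  by_contra! hne
  obtain ⟨σ₀, hσ₀, hmin⟩ := Finset.exists_min_image (g.support.filter (·.head < γ)) Node.head
    (by obtain ⟨σ, hσ, hgσ⟩ := hne; exact ⟨σ, Finset.mem_filter.mpr ⟨mem_support_iff.mpr hgσ, hσ⟩⟩)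
  obtain ⟨hgσ₀, hσ₀γ⟩ := Finset.mem_filter.mp hσ₀
  have hchildren : toParent g σ₀ = 0 := toParent_apply_eq_zero fun σ hσ => by
    by_contra hgσ
    have hlt := Node.head_lt_head_of_parent_eq hσ
    exact (hmin σ (Finset.mem_filter.mpr ⟨mem_support_iff.mpr hgσ, hlt.trans hσ₀γ⟩)).not_gt hlt
  have hhσ₀ : h σ₀ = 0 := notMem_support_iff.mp fun hσ => (hh σ₀ hσ).not_gt hσ₀γ
  have hfσ₀ : f σ₀ = p * g σ₀ := by simp [hfg, hchildren, hhσ₀]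
  obtain ⟨hnonneg, hltp⟩ := hf σ₀
  rw [hfσ₀] at hnonneg hltp
  rcases lt_or_gt_of_ne (mem_support_iff.mp hgσ₀) with hneg | hpos <;> nlinarith

lemma IsNormalForm.le_head_of_mem_heightSub {γ : Ordinal.{0}} {f : Node α →₀ ℤ}
    (hf : IsNormalForm p f) (hx : mk p α f ∈ heightSub p γ) : ∀ σ ∈ f.support, γ ≤ σ.head := by
  obtain ⟨h, hh, hhf⟩ := mem_heightSub.mp hx
  obtain ⟨g, hg⟩ := mk_eq_mk_iff.mp hhf.symm
  have hfg : f = h + (p : ℤ) • g - toParent g := by rw [add_sub_assoc, hg]; abel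
  have hg0 := eq_zero_of_head_lt hf hh hfg
  intro σ hσ
  by_contra! hσγ
  have hchildren : toParent g σ = 0 := toParent_apply_eq_zero fun τ hτ =>
    hg0 τ ((Node.head_lt_head_of_parent_eq hτ).trans hσγ)
  have hhσ : h σ = 0 := notMem_support_iff.mp fun hσ' => (hh σ hσ').not_gt hσγ
  exact mem_support_iff.mp hσ (by simp [hfg, hchildren, hhσ, hg0 σ hσγ])

lemma length_le_of_mem_support_toParent {g : Node α →₀ ℤ} {N : ℕ}
    (hg : ∀ σ ∈ g.support, σ.1.length ≤ N + 1) : ∀ τ ∈ (toParent g).support, τ.1.length ≤ N := by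
  intro τ hτ
  obtain ⟨σ, hσ, hστ⟩ := exists_parent_eq_of_mem_support_toParent hτ
  have := Node.length_eq_of_parent_eq hστ
  have := hg σ hσ
  omega

/-- Reduce the coefficients at the nodes of maximal length `N + 1` modulo `p`, carrying the
quotients to the parents, and recurse. -/
lemma exists_isNormalForm_of_length_le (hp : 0 < p) (N : ℕ) (f : Node α →₀ ℤ)
    (hf : ∀ σ ∈ f.support, σ.1.length ≤ N) :
    ∃ f', IsNormalForm p f' ∧ (∀ σ ∈ f'.support, σ.1.length ≤ N) ∧ mk p α f' = mk p α f := by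
  classical
  induction N generalizing f with
  | zero =>
    refine ⟨0, fun σ => by simpa using hp, by simp, ?_⟩
    rw [show f = 0 from ext fun σ => by_contra fun h => by
      have := hf σ (mem_support_iff.mpr h); have := σ.one_le_length; omega]
  | succ N ih =>
    set top := f.filter (·.1.length = N + 1)
    set low := f.filter (¬·.1.length = N + 1)
    set r := top.mapRange (· % (p : ℤ)) (Int.zero_emod _)
    set q := top.mapRange (· / (p : ℤ)) (Int.zero_ediv _)
    have htop : ∀ σ ∈ top.support, σ ∈ f.support ∧ σ.1.length = N + 1 := fun σ hσ => by
      simpa only [top, support_filter, Finset.mem_filter] using hσ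
    have hr : ∀ σ ∈ r.support, σ.1.length = N + 1 := fun σ hσ => (htop σ (support_mapRange hσ)).2
    have hlow : ∀ σ ∈ (low + toParent q).support, σ.1.length ≤ N := by
      intro σ hσ
      rcases Finset.mem_union.mp (support_add hσ) with hσ | hσ
      · simp only [low, support_filter, Finset.mem_filter] at hσ
        have := hf σ hσ.1
        omega
      · refine length_le_of_mem_support_toParent (fun τ hτ => ?_) σ hσ
        exact (htop τ (support_mapRange hτ)).2.le
    obtain ⟨f', hnorm, hlen, hmk⟩ := ih (low + toParent q) hlow
    refine ⟨f' + r, fun σ => ?_, fun σ hσ => ?_, ?_⟩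
    · by_cases hσ : σ.1.length = N + 1
      · have : f' σ = 0 := notMem_support_iff.mp fun h => by have := hlen σ h; omega
        simp only [Finsupp.add_apply, this, zero_add, r, mapRange_apply]
        exact ⟨Int.emod_nonneg _ (by omega), Int.emod_lt_of_pos _ (by omega)⟩
      · have : r σ = 0 := notMem_support_iff.mp fun h => hσ (hr σ h)
        simpa [this] using hnorm σ
    · rcases Finset.mem_union.mp (support_add hσ) with hσ | hσ
      · have := hlen σ hσ
        omega
      · exact (hr σ hσ).le
    · have hdiv : top = r + (p : ℤ) • q := ext fun σ => (Int.emod_add_mul_ediv _ _).symm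
      have hsplit : f = low + r + (p : ℤ) • q := by
        rw [add_assoc, ← hdiv, add_comm]
        exact (filter_add_filter_not f _).symm
      rw [map_add, hmk, hsplit, map_add, map_add, map_add, mk_zsmul_eq_mk_toParent]
      abel

lemma exists_isNormalForm (hp : 0 < p) (x : TreeGroup p α) :
    ∃ f, IsNormalForm p f ∧ mk p α f = x := by
  obtain ⟨f, rfl⟩ := (relations p α).mkQ_surjective x
  obtain ⟨f', hf', -, hmk⟩ := exists_isNormalForm_of_length_le hp _ f fun σ hσ =>
    Finset.le_sup (f := fun σ : Node α => σ.1.length) hσ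
  exact ⟨f', hf', hmk⟩

lemma mk_eq_sum (f : Node α →₀ ℤ) : mk p α f = f.sum fun σ n => n • mk p α (single σ 1) := by
  conv_lhs => rw [← f.sum_single]
  rw [map_finsuppSum]
  exact Finsupp.sum_congr fun σ _ => by rw [← smul_single_one, map_zsmul]

lemma heightSub_zero : heightSub p (α := α) 0 = ⊤ := eq_top_iff.mpr fun x _ => by
  obtain ⟨f, rfl⟩ := (relations p α).mkQ_surjective x
  exact mem_heightSub.mpr ⟨f, fun σ _ => zero_le, rfl⟩

lemma mk_single_mem_heightSub {γ : Ordinal.{0}} {σ : Node α} (hσ : γ ≤ σ.head) :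
    mk p α (single σ 1) ∈ heightSub p γ :=
  mem_heightSub.mpr
    ⟨single σ 1, fun τ hτ => by rwa [Finset.mem_singleton.mp (support_single_subset hτ)], rfl⟩

lemma nsmul_mk_single_cons (γ : α.ToType) (σ : Node α) (h : (γ : Ordinal.{0}) < σ.head) :
    p • mk p α (single (Node.cons γ σ h) 1) = mk p α (single σ 1) := by
  rw [nsmul_mk, toParent_single, parentVec, Node.parent_cons, Option.elim_some]

lemma heightSub_succ (β : Ordinal.{0}) :
    heightSub p (β + 1) = (heightSub p β).map (pHom p (TreeGroup p α)) := by
  apply le_antisymm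
  · intro x hx
    obtain ⟨f, hf, rfl⟩ := mem_heightSub.mp hx
    rw [mk_eq_sum]
    refine AddSubgroup.sum_mem _ fun τ hτ => AddSubgroup.zsmul_mem _ ?_ _
    have hβτ : β < τ.head := Order.add_one_le_iff.mp (hf τ hτ)
    have hcons : ((Ordinal.ToType.mk ⟨β, hβτ.trans τ.head_lt⟩ : α.ToType) : Ordinal.{0}) <
        τ.head := by
      simpa using hβτ
    rw [← nsmul_mk_single_cons _ τ hcons]
    exact ⟨_, mk_single_mem_heightSub (by simp), rfl⟩
  · rintro _ ⟨y, hy, rfl⟩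
    obtain ⟨f, hf, rfl⟩ := mem_heightSub.mp hy
    refine mem_heightSub.mpr ⟨toParent f, fun τ hτ => ?_, (nsmul_mk f).symm⟩
    obtain ⟨σ, hσ, hστ⟩ := exists_parent_eq_of_mem_support_toParent hτ
    exact Order.add_one_le_of_lt ((hf σ hσ).trans_lt (Node.head_lt_head_of_parent_eq hστ))

lemma heightSub_limit (hp : 0 < p) {o : Ordinal.{0}} (ho : Order.IsSuccLimit o) :
    heightSub p o = ⨅ (γ : Ordinal.{0}) (_ : γ < o), heightSub p (α := α) γ := by
  refine le_antisymm (le_iInf₂ fun γ hγ => heightSub_antitone hγ.le) fun x hx => ?_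
  obtain ⟨f, hf, rfl⟩ := exists_isNormalForm hp x
  refine mem_heightSub.mpr ⟨f, fun σ hσ => ?_, rfl⟩
  by_contra! hσo
  have hmem := iInf₂_le (f := fun γ (_ : γ < o) => heightSub p (α := α) γ) _
    (ho.add_one_lt hσo) hx
  exact (Order.lt_add_one_iff.mpr le_rfl).not_ge (hf.le_head_of_mem_heightSub hmem σ hσ)

lemma ulmSub_eq_heightSub (hp : 0 < p) (β : Ordinal.{0}) :
    ulmSub p (TreeGroup p α) β = heightSub p β :=
  ulmSub_eq_of heightSub_zero heightSub_succ (fun _ ho => heightSub_limit hp ho) β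

lemma heightSub_self : heightSub p (α := α) α = ⊥ := eq_bot_iff.mpr fun x hx => by
  obtain ⟨f, hf, rfl⟩ := mem_heightSub.mp hx
  have : f.support = ∅ := Finset.eq_empty_of_forall_notMem fun σ hσ =>
    (hf σ hσ).not_gt σ.head_lt
  rw [support_eq_empty.mp this, map_zero]
  exact zero_mem _

lemma heightSub_ne_heightSub_succ (hp : 1 < p) {β : Ordinal.{0}} (hβ : β < α) :
    heightSub p (α := α) β ≠ heightSub p (β + 1) := by
  classical
  intro h
  let σ : Node α := Node.root (Ordinal.ToType.mk ⟨β, hβ⟩)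
  have hσ : σ.head = β := by simp [σ]
  have hmem := h ▸ mk_single_mem_heightSub (p := p) hσ.ge
  have hnormal : IsNormalForm p (single σ 1) := fun τ => by
    rw [single_apply]
    split_ifs <;> omega
  have := hnormal.le_head_of_mem_heightSub hmem σ (by simp)
  exact (Order.lt_add_one_iff.mpr le_rfl).not_ge (hσ ▸ this)

lemma pow_nsmul_mk_single_eq_zero {n : ℕ} {σ : Node α} (hσ : σ.1.length ≤ n) :
    p ^ n • mk p α (single σ 1) = 0 := by
  induction n generalizing σ with
  | zero => exact absurd hσ (by have := σ.one_le_length; omega)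
  | succ n ih =>
    rw [pow_succ', mul_nsmul, nsmul_mk, toParent_single, parentVec]
    rcases h : σ.parent with _ | τ
    · simp
    · have := Node.length_eq_of_parent_eq h
      exact ih (by omega)

lemma isAbelianPGroup : IsAbelianPGroup p (TreeGroup p α) := fun x => by
  obtain ⟨f, rfl⟩ := (relations p α).mkQ_surjective x
  refine ⟨f.support.sup (·.1.length), ?_⟩
  rw [mk_eq_sum, Finsupp.smul_sum]
  refine Finset.sum_eq_zero fun σ hσ => ?_
  dsimp only
  rw [smul_comm,
    pow_nsmul_mk_single_eq_zero (Finset.le_sup (f := (·.1.length)) hσ), smul_zero]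

instance [Countable α.ToType] : Countable (TreeGroup p α) :=
  (relations p α).mkQ_surjective.countable

lemma infinite_setOf_lt (hα : Order.IsSuccLimit α) {γ : Ordinal.{0}} (hγ : γ < α) :
    {x : α.ToType | γ < (x : Ordinal.{0})}.Infinite := by
  have : Nonempty α.ToType := ⟨Ordinal.ToType.mk ⟨γ, hγ⟩⟩
  refine Set.infinite_of_forall_exists_gt fun x => ?_
  have hlt : max (x : Ordinal.{0}) γ + 1 < α :=
    hα.add_one_lt (max_lt (Ordinal.ToType.toOrd x).2 hγ)
  refine ⟨Ordinal.ToType.mk ⟨_, hlt⟩, ?_, ?_⟩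
  · simp
  · rw [← Ordinal.ToType.mk.symm.lt_iff_lt, ← Subtype.coe_lt_coe]
    simp

lemma mk_mapDomain {ι : Type*} (ν : ι → Node α) (v : ι →₀ ℤ) :
    mk p α (mapDomain ν v) = v.sum fun i n => n • mk p α (single (ν i) 1) := by
  rw [mapDomain, map_finsuppSum]
  exact Finsupp.sum_congr fun i _ => by rw [← smul_single_one, map_zsmul]

lemma mk_mapDomain_mem_heightSub {ι : Type*} {ν : ι → Node α} {γ : Ordinal.{0}}
    (hν : ∀ i, γ ≤ (ν i).head) (v : ι →₀ ℤ) : mk p α (mapDomain ν v) ∈ heightSub p γ := by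
  classical
  refine mem_heightSub.mpr ⟨_, fun σ hσ => ?_, rfl⟩
  obtain ⟨i, -, rfl⟩ := Finset.mem_image.mp (mapDomain_support hσ)
  exact hν i

lemma eq_zero_of_mk_mapDomain_mem_heightSub [NeZero p] {ι : Type*} {ν : ι → Node α}
    (hν : Function.Injective ν) {γ : Ordinal.{0}} (hνγ : ∀ i, (ν i).head < γ) (c : ι →₀ ZMod p)
    (hc : mk p α (mapDomain ν (c.mapRange (fun a => (a.val : ℤ)) (by simp))) ∈ heightSub p γ) :
    c = 0 := by
  have hnormal :
      IsNormalForm p (mapDomain ν (c.mapRange (fun a => (a.val : ℤ)) (by simp))) := by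
    intro σ
    by_cases hσ : σ ∈ Set.range ν
    · obtain ⟨i, rfl⟩ := hσ
      rw [mapDomain_apply hν, mapRange_apply]
      exact ⟨by positivity, by exact_mod_cast (c i).val_lt⟩
    · rw [mapDomain_of_notMem_range _ _ hσ]
      exact ⟨le_rfl, by exact_mod_cast NeZero.pos p⟩
  ext i
  by_contra hci
  refine (hνγ i).not_ge (hnormal.le_head_of_mem_heightSub hc _ (mem_support_iff.mpr ?_))
  rw [mapDomain_apply hν, mapRange_apply]
  exact_mod_cast (ZMod.val_ne_zero _).mpr hci

lemma mk_single_sub_mk_single_mem_ulmP (hp : 0 < p) {β : Ordinal.{0}} {σ τ : Node α}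
    (hpar : σ.parent = τ.parent) (hσ : β ≤ σ.head) (hτ : β ≤ τ.head) :
    mk p α (single σ 1) - mk p α (single τ 1) ∈ ulmP p (TreeGroup p α) β := by
  refine AddSubgroup.mem_inf.mpr ⟨?_, ?_⟩
  · rw [AddMonoidHom.mem_ker, pHom_apply, smul_sub, nsmul_mk, nsmul_mk, toParent_single,
      toParent_single, parentVec, parentVec, hpar]
    exact sub_self _
  · rw [ulmSub_eq_heightSub hp]
    exact sub_mem (mk_single_mem_heightSub hσ) (mk_single_mem_heightSub hτ)

lemma ulmInvariant_eq_aleph0 [Countable α.ToType] (hp : p.Prime) (hα : Order.IsSuccLimit α)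
    {β : Ordinal.{0}} (hβ : β < α) : ulmInvariant p (TreeGroup p α) β = Cardinal.aleph0 := by
  have := Fact.mk hp
  have hβ1 : β + 1 < α := hα.add_one_lt hβ
  have hββ1 : β < β + 1 := Order.lt_add_one_iff.mpr le_rfl
  have : Infinite {x : α.ToType | β + 1 < (x : Ordinal.{0})} :=
    (infinite_setOf_lt hα hβ1).to_subtype
  let child (γ : Ordinal.{0}) (hγ : γ ≤ β + 1) (x : {x : α.ToType | β + 1 < (x : Ordinal.{0})}) :
      Node α :=
    Node.cons (Ordinal.ToType.mk ⟨γ, hγ.trans_lt hβ1⟩) (Node.root x)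
      (by simpa using hγ.trans_lt x.2)
  have hchild (γ hγ) : Function.Injective (child γ hγ) := fun x y h =>
    Subtype.ext (Node.root_injective (by simpa [child] using congrArg Node.parent h))
  let σ := child β hββ1.le
  let τ := child (β + 1) le_rfl
  refine le_antisymm (ulmInvariant_le_aleph0 β) (aleph0_le_ulmInvariant
    (fun x => mk p α (single (σ x) 1) - mk p α (single (τ x) 1))
    (fun x => mk_single_sub_mk_single_mem_ulmP hp.pos (by simp [σ, τ, child]) (by simp [σ, child])
      (by simp [τ, child, hββ1.le])) fun c hc => ?_)
  rw [ulmSub_eq_heightSub hp.pos] at hc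
  refine eq_zero_of_mk_mapDomain_mem_heightSub (hchild β hββ1.le) (γ := β + 1)
    (by simp [child]) c ?_
  have hτ := mk_mapDomain_mem_heightSub (p := p) (ν := τ) (γ := β + 1) (by simp [τ, child])
    (c.mapRange (fun a => (a.val : ℤ)) (by simp))
  convert add_mem hc hτ using 1
  simp only [mk_mapDomain, sum_mapRange_index, zero_smul, implies_true]
  rw [← Finsupp.sum_add]
  refine Finsupp.sum_congr fun x _ => ?_
  rw [natCast_zsmul, natCast_zsmul, smul_sub, sub_add_cancel]

end TreeGroup

/-- For every countable limit ordinal `α` there is a countable reduced abelian `p`-group of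
length exactly `α` with all Ulm invariants below `α` equal to `ℵ₀`. -/
theorem exists_group_of_length (p : ℕ) (hp : p.Prime) (α : Ordinal.{0}) (hα : Order.IsSuccLimit α)
    (hαc : α.card ≤ Cardinal.aleph0) :
    ∃ (G : Type) (_ : AddCommGroup G), Countable G ∧ IsAbelianPGroup p G ∧
      IsReducedPGroup p G ∧ ulmLength p G = α ∧
      ∀ β : Ordinal.{0}, β < α → ulmInvariant p G β = Cardinal.aleph0 := by
  have : Countable α.ToType := Cardinal.mk_le_aleph0_iff.mp ((Cardinal.mk_toType α).trans_le hαc)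
  have hne : ∀ β < α, ulmSub p (TreeGroup p α) β ≠ ulmSub p (TreeGroup p α) (β + 1) :=
    fun β hβ => by
      rw [TreeGroup.ulmSub_eq_heightSub hp.pos, TreeGroup.ulmSub_eq_heightSub hp.pos]
      exact TreeGroup.heightSub_ne_heightSub_succ hp.one_lt hβ
  have hbot : ulmSub p (TreeGroup p α) α = ⊥ := by
    rw [TreeGroup.ulmSub_eq_heightSub hp.pos, TreeGroup.heightSub_self]
  exact ⟨TreeGroup p α, inferInstance, inferInstance, TreeGroup.isAbelianPGroup,
    isReducedPGroup_of_ulmSub_eq_bot hne hbot, ulmLength_eq_of hne hbot,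
    fun β hβ => TreeGroup.ulmInvariant_eq_aleph0 hp hα hβ⟩
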